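/- Two-object formation criterion: consider leader dynamics ẋ₁ = A₁x₁ + B₁u₁(t) and follower dynamics ẋ₂ = A₂x₂ + B₂u₂ with affine feedback u₂(x₁,x₂) = Sx₂ + Kx₁ + k. If (A₂,B₂) is stabilizable (there is S with A₂ + B₂S Hurwitz), and there exist N ∈ ℝ^{m×n}, k̃ ∈ ℝ^m with B₂N = A₁ − A₂ and B₂k̃ = A₂d, then choosing K = N − S and k = k̃ + S d, there are constants C, α > 0 and β > 0 such that for every continuous u₁ and all initial conditions, the error z(t) = x₂(t) − x₁(t) + d satisfies ‖z(t)‖ ≤ C e^{−αt}‖z(0)‖ + β sup_{τ∈[0,t]} ‖u₁(τ)‖. -/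

import Mathlib

/-!
The error `z = x₂ - x₁ + d` obeys `z' = Ãz - B₁u₁` with `Ã = A₂ + B₂S`: the conditions on `N` and
`k̃` make the feedback cancel every term that does not depend on `z`. By variation of constants,
`z(t) = e^{tÃ}z(0) - ∫₀ᵗ e^{(t-s)Ã}B₁u₁(s) ds`, so everything reduces to the bound
`‖e^{tÃ}‖ ≤ Ce^{-αt}`. After complexification, every vector is a sum of generalized eigenvectors of
`Ã`, along each of which `e^{tÃ}` acts as `e^{tμ}` times a polynomial in `t`; since `Re μ < 0`, each
orbit decays exponentially, and the uniform boundedness principle makes the decay uniform.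
-/

open NormedSpace Finset
open scoped Matrix.Norms.L2Operator

theorem pow_div_factorial_mul_exp_le {α t : ℝ} (hα : 0 < α) (ht : 0 ≤ t) (i : ℕ) :
    t ^ i / i.factorial * Real.exp (-(2 * α) * t) ≤ α⁻¹ ^ i * Real.exp (-α * t) := by
  have h : t ^ i / i.factorial = α⁻¹ ^ i * ((α * t) ^ i / i.factorial) := by
    rw [mul_pow, ← mul_div_assoc, ← mul_assoc, ← mul_pow, inv_mul_cancel₀ hα.ne', one_pow, one_mul]
  calc t ^ i / i.factorial * Real.exp (-(2 * α) * t)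
      ≤ α⁻¹ ^ i * Real.exp (α * t) * Real.exp (-(2 * α) * t) := by
        rw [h]
        gcongr
        exact Real.pow_div_factorial_le_exp _ (by positivity) i
    _ = α⁻¹ ^ i * Real.exp (-α * t) := by
        rw [mul_assoc, ← Real.exp_add]; ring_nf

theorem integral_exp_neg_mul_sub {α : ℝ} (hα : α ≠ 0) (t : ℝ) :
    ∫ s in (0 : ℝ)..t, Real.exp (-α * (t - s)) = (1 - Real.exp (-α * t)) / α := by
  have h : ∀ s, -α * (t - s) = α * s + -α * t := fun s => by ring
  simp_rw [h]
  rw [intervalIntegral.integral_comp_mul_add (f := Real.exp) hα, integral_exp, smul_eq_mul,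
    show α * t + -α * t = 0 by ring, show α * 0 + -α * t = -α * t by ring, Real.exp_zero,
    inv_mul_eq_div]

theorem norm_le_iSup_Icc {F : Type*} [NormedAddCommGroup F] {u : ℝ → F} (hu : Continuous u)
    {a b s : ℝ} (hs : s ∈ Set.Icc a b) : ‖u s‖ ≤ ⨆ τ : Set.Icc a b, ‖u τ‖ := by
  refine le_ciSup (f := fun τ : Set.Icc a b => ‖u τ‖) ?_ ⟨s, hs⟩
  have h := (isCompact_Icc (a := a) (b := b)).bddAbove_image (f := fun s => ‖u s‖)
    hu.norm.continuousOn
  rwa [Set.image_eq_range] at h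

section OperatorExponential

variable {E : Type*} [NormedAddCommGroup E] [NormedSpace ℂ E]

-- The lemmas on `NormedSpace.exp` ask for a `ℚ`-normed algebra, which is not inferred here.
noncomputable instance : NormedAlgebra ℚ (E →L[ℂ] E) :=
  NormedAlgebra.restrictScalars ℚ ℂ (E →L[ℂ] E)

section Decay

variable [CompleteSpace E]

theorem exp_smul_apply_eq_sum_of_pow_apply_eq_zero (g : E →L[ℂ] E) (c : ℂ) {v : E} {k : ℕ}
    (hk : (g ^ k) v = 0) :
    exp (c • g) v = ∑ i ∈ range k, ((i.factorial : ℂ)⁻¹ * c ^ i) • (g ^ i) v := by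
  have hsum := (ContinuousLinearMap.apply ℂ E v).hasSum (exp_series_hasSum_exp' (𝕂 := ℂ) (c • g))
  refine hsum.unique (hasSum_sum_of_ne_finset_zero fun i hi => ?_) |>.trans
    (sum_congr rfl fun i _ => ?_)
  · have : (g ^ i) v = 0 := by
      rw [← Nat.sub_add_cancel (not_lt.mp (mem_range.not.mp hi)), pow_add,
        mul_apply_eq_comp, hk, map_zero]
    simp [smul_pow, this]
  · simp [smul_pow, mul_smul]

theorem exp_smul_apply_eq_cexp_smul (f : E →L[ℂ] E) (μ : ℂ) (t : ℝ) (v : E) :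
    exp (t • f) v = Complex.exp (t * μ) • exp ((t : ℂ) • (f - μ • 1)) v := by
  have hsplit : t • f = (t * μ : ℂ) • (1 : E →L[ℂ] E) + (t : ℂ) • (f - μ • 1) := by
    rw [smul_sub, smul_smul, ← Complex.coe_smul]; abel
  have hcomm : Commute ((t * μ : ℂ) • (1 : E →L[ℂ] E)) ((t : ℂ) • (f - μ • 1)) :=
    ((Commute.one_left _).smul_left _).smul_right _
  rw [hsplit, exp_add_of_commute hcomm, ← Algebra.algebraMap_eq_smul_one,
    ← algebraMap_exp_comm, ← Complex.exp_eq_exp_ℂ]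
  rfl

theorem exists_norm_exp_smul_apply_le_of_pow_sub_apply_eq_zero (f : E →L[ℂ] E) {μ : ℂ} {α : ℝ}
    (hα : 0 < α) (hμ : μ.re ≤ -(2 * α)) {v : E} {k : ℕ} (hk : ((f - μ • 1) ^ k) v = 0) :
    ∃ C, ∀ t : ℝ, 0 ≤ t → ‖exp (t • f) v‖ ≤ C * Real.exp (-α * t) := by
  set g := f - μ • 1
  refine ⟨∑ i ∈ range k, α⁻¹ ^ i * ‖(g ^ i) v‖, fun t ht => ?_⟩
  have hμt : ‖Complex.exp (t * μ)‖ ≤ Real.exp (-(2 * α) * t) := by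
    rw [Complex.norm_exp, Real.exp_le_exp, Complex.re_ofReal_mul]
    nlinarith
  have hterm : ∀ i, ‖((i.factorial : ℂ)⁻¹ * (t : ℂ) ^ i) • (g ^ i) v‖
      = t ^ i / i.factorial * ‖(g ^ i) v‖ := fun i => by
    rw [norm_smul, norm_mul, norm_inv, norm_pow, Complex.norm_natCast, Complex.norm_real,
      Real.norm_of_nonneg ht, inv_mul_eq_div]
  rw [exp_smul_apply_eq_cexp_smul f μ, exp_smul_apply_eq_sum_of_pow_apply_eq_zero g _ hk,
    norm_smul, sum_mul]
  calc ‖Complex.exp (t * μ)‖ * ‖∑ i ∈ range k, ((i.factorial : ℂ)⁻¹ * (t : ℂ) ^ i) • (g ^ i) v‖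
      ≤ Real.exp (-(2 * α) * t) * ∑ i ∈ range k, t ^ i / i.factorial * ‖(g ^ i) v‖ := by
        gcongr
        exact (norm_sum_le _ _).trans_eq (sum_congr rfl fun i _ => hterm i)
    _ = ∑ i ∈ range k, t ^ i / i.factorial * Real.exp (-(2 * α) * t) * ‖(g ^ i) v‖ := by
        rw [mul_sum]; exact sum_congr rfl fun i _ => by ring
    _ ≤ ∑ i ∈ range k, α⁻¹ ^ i * Real.exp (-α * t) * ‖(g ^ i) v‖ :=
        sum_le_sum fun i _ =>
          mul_le_mul_of_nonneg_right (pow_div_factorial_mul_exp_le hα ht i) (norm_nonneg _)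
    _ = ∑ i ∈ range k, α⁻¹ ^ i * ‖(g ^ i) v‖ * Real.exp (-α * t) :=
        sum_congr rfl fun i _ => by ring

end Decay

section FiniteDimensional

variable [FiniteDimensional ℂ E]

theorem exists_norm_exp_smul_apply_le (f : E →L[ℂ] E) {α : ℝ} (hα : 0 < α)
    (hf : ∀ μ ∈ spectrum ℂ f, μ.re ≤ -(2 * α)) (v : E) :
    ∃ C, ∀ t : ℝ, 0 ≤ t → ‖exp (t • f) v‖ ≤ C * Real.exp (-α * t) := by
  have hv : v ∈ ⨆ μ, Module.End.maxGenEigenspace (f : Module.End ℂ E) μ := by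
    rw [Module.End.iSup_maxGenEigenspace_eq_top]; trivial
  refine Submodule.iSup_induction _ hv
    (motive := fun v => ∃ C, ∀ t : ℝ, 0 ≤ t → ‖exp (t • f) v‖ ≤ C * Real.exp (-α * t))
    (fun μ v hv => ?_) ⟨0, fun t _ => by simp⟩
    fun v w ⟨C, hC⟩ ⟨D, hD⟩ => ⟨C + D, fun t ht => ?_⟩
  · rcases eq_or_ne v 0 with rfl | hv0
    · exact ⟨0, fun t _ => by simp⟩
    have hμ : μ ∈ spectrum ℂ f := by
      rw [ContinuousLinearMap.spectrum_eq]
      exact (Module.End.HasUnifEigenvalue.lt zero_lt_one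
        ((Submodule.ne_bot_iff _).mpr ⟨v, hv, hv0⟩)).mem_spectrum
    obtain ⟨k, hk⟩ := (Module.End.mem_maxGenEigenspace _ _ _).mp hv
    refine exists_norm_exp_smul_apply_le_of_pow_sub_apply_eq_zero f hα (hf μ hμ) (k := k) ?_
    rwa [← ContinuousLinearMap.toLinearMap_one, ← ContinuousLinearMap.toLinearMap_smul,
      ← ContinuousLinearMap.toLinearMap_sub, ← ContinuousLinearMap.toLinearMap_pow] at hk
  · rw [map_add, add_mul]
    exact (norm_add_le _ _).trans (add_le_add (hC t ht) (hD t ht))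

theorem exists_norm_exp_smul_le (f : E →L[ℂ] E) {α : ℝ} (hα : 0 < α)
    (hf : ∀ μ ∈ spectrum ℂ f, μ.re ≤ -(2 * α)) :
    ∃ C > 0, ∀ t : ℝ, 0 ≤ t → ‖exp (t • f)‖ ≤ C * Real.exp (-α * t) := by
  let g : Set.Ici (0 : ℝ) → E →L[ℂ] E := fun t => Real.exp (α * t) • exp ((t : ℝ) • f)
  have hg : ∀ (t : Set.Ici (0 : ℝ)) (v : E),
      ‖g t v‖ = Real.exp (α * t) * ‖exp ((t : ℝ) • f) v‖ := fun t v => by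
    rw [smul_apply, norm_smul, Real.norm_of_nonneg (Real.exp_nonneg _)]
  obtain ⟨C, hC⟩ := banach_steinhaus (g := g) fun v => by
    obtain ⟨C, hC⟩ := exists_norm_exp_smul_apply_le f hα hf v
    refine ⟨C, fun t => ?_⟩
    rw [hg, ← le_div_iff₀' (Real.exp_pos _), div_eq_mul_inv, ← Real.exp_neg, ← neg_mul]
    exact hC t t.2
  refine ⟨max C 1, by positivity, fun t ht => ?_⟩
  have h := (hC ⟨t, ht⟩).trans (le_max_left C 1)
  rwa [norm_smul, Real.norm_of_nonneg (Real.exp_nonneg _), ← le_div_iff₀' (Real.exp_pos _),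
    div_eq_mul_inv, ← Real.exp_neg, ← neg_mul] at h

theorem exists_norm_exp_smul_le_of_forall_re_neg (f : E →L[ℂ] E)
    (hf : ∀ μ ∈ spectrum ℂ f, μ.re < 0) :
    ∃ C > 0, ∃ α > 0, ∀ t : ℝ, 0 ≤ t → ‖exp (t • f)‖ ≤ C * Real.exp (-α * t) := by
  obtain ⟨a, ha, hle⟩ := (spectrum.isCompact f).exists_forall_le' (f := fun μ : ℂ => -μ.re)
    Complex.continuous_re.neg.continuousOn (a := 0) fun μ hμ => neg_pos.mpr (hf μ hμ)
  obtain ⟨C, hC, hexp⟩ := exists_norm_exp_smul_le f (half_pos ha) fun μ hμ => by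
    linarith [hle μ hμ]
  exact ⟨C, hC, a / 2, half_pos ha, hexp⟩

end FiniteDimensional

section Duhamel

variable [CompleteSpace E]

theorem exp_smul_mul_exp_smul (f : E →L[ℂ] E) (a b : ℝ) :
    exp (a • f) * exp (b • f) = exp ((a + b) • f) := by
  rw [add_smul, exp_add_of_commute (((Commute.refl f).smul_left a).smul_right b)]

theorem hasDerivAt_exp_neg_smul_apply (f : E →L[ℂ] E) {y : ℝ → E} {y' : E} {s : ℝ}
    (hy : HasDerivAt y y' s) :
    HasDerivAt (fun r => exp ((-r) • f) (y r)) (exp ((-s) • f) (y' - f (y s))) s := by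
  have hexp : HasDerivAt (fun r : ℝ => exp ((-r) • f)) (-(exp ((-s) • f) * f)) s := by
    simpa only [Function.comp_def, neg_one_smul] using
      (hasDerivAt_exp_smul_const (𝕂 := ℝ) f (-s)).scomp s (hasDerivAt_neg s)
  -- `clm_apply` differentiates over `ℝ`, so the operators are first seen as `ℝ`-linear.
  have hexpR := (ContinuousLinearMap.restrictScalarsL ℂ E E ℝ ℝ).hasFDerivAt.comp_hasDerivAt s hexp
  refine (hexpR.clm_apply hy).congr_deriv ?_
  change -exp ((-s) • f) (f (y s)) + exp ((-s) • f) y' = _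
  rw [map_sub, neg_add_eq_sub]

theorem eq_exp_smul_add_integral_of_hasDerivAt (f : E →L[ℂ] E) {y v : ℝ → E}
    (hv : Continuous v) (hy : ∀ s, HasDerivAt y (f (y s) + v s) s) (t : ℝ) :
    y t = exp (t • f) (y 0) + ∫ s in (0 : ℝ)..t, exp ((t - s) • f) (v s) := by
  have hint : IntervalIntegrable (fun s => exp ((-s) • f) (v s)) MeasureTheory.volume 0 t :=
    ((exp_continuous.comp (continuous_neg.smul continuous_const)).clm_apply hv).intervalIntegrable
      _ _
  have hFTC := intervalIntegral.integral_eq_sub_of_hasDerivAt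
    (fun s _ => (hasDerivAt_exp_neg_smul_apply f (hy s)).congr_deriv (by rw [add_sub_cancel_left]))
    hint
  have hcancel : ∀ (s : ℝ) (w : E), exp (t • f) (exp ((-s) • f) w) = exp ((t - s) • f) w :=
    fun s w => by rw [← mul_apply_eq_comp, exp_smul_mul_exp_smul, sub_eq_add_neg]
  simp_rw [← hcancel]
  rw [ContinuousLinearMap.intervalIntegral_comp_comm _ hint, hFTC, map_sub, hcancel, hcancel]
  simp

theorem norm_le_of_hasDerivAt_of_norm_exp_smul_le (f : E →L[ℂ] E) {C α : ℝ} (hC : 0 ≤ C)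
    (hα : 0 < α) (hexp : ∀ t : ℝ, 0 ≤ t → ‖exp (t • f)‖ ≤ C * Real.exp (-α * t))
    {y v : ℝ → E} (hv : Continuous v) (hy : ∀ s, HasDerivAt y (f (y s) + v s) s) {t V : ℝ}
    (ht : 0 ≤ t) (hV : ∀ s ∈ Set.Icc 0 t, ‖v s‖ ≤ V) :
    ‖y t‖ ≤ C * Real.exp (-α * t) * ‖y 0‖ + C / α * V := by
  have hV0 : 0 ≤ V := (norm_nonneg _).trans (hV 0 ⟨le_rfl, ht⟩)
  have hterm : ∀ s ∈ Set.Ioc 0 t,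
      ‖exp ((t - s) • f) (v s)‖ ≤ C * V * Real.exp (-α * (t - s)) := fun s hs => calc
    ‖exp ((t - s) • f) (v s)‖ ≤ ‖exp ((t - s) • f)‖ * ‖v s‖ := ContinuousLinearMap.le_opNorm _ _
    _ ≤ C * Real.exp (-α * (t - s)) * V := by
        gcongr
        · exact hexp _ (sub_nonneg.mpr hs.2)
        · exact hV s (Set.Ioc_subset_Icc_self hs)
    _ = C * V * Real.exp (-α * (t - s)) := by ring
  have hintegral : ‖∫ s in (0 : ℝ)..t, exp ((t - s) • f) (v s)‖ ≤ C / α * V := calc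
    _ ≤ ∫ s in (0 : ℝ)..t, C * V * Real.exp (-α * (t - s)) :=
        intervalIntegral.norm_integral_le_of_norm_le ht (Filter.Eventually.of_forall hterm)
          ((by fun_prop : Continuous fun s => C * V * Real.exp (-α * (t - s))).intervalIntegrable
            _ _)
    _ = C * V * ((1 - Real.exp (-α * t)) / α) := by
        rw [intervalIntegral.integral_const_mul, integral_exp_neg_mul_sub hα.ne']
    _ ≤ C / α * V := by
        rw [mul_div_assoc', div_mul_eq_mul_div, div_le_div_iff_of_pos_right hα]
        nlinarith [mul_nonneg hC hV0, Real.exp_pos (-α * t)]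
  rw [eq_exp_smul_add_integral_of_hasDerivAt f hv hy t]
  calc _ ≤ ‖exp (t • f) (y 0)‖ + ‖∫ s in (0 : ℝ)..t, exp ((t - s) • f) (v s)‖ := norm_add_le _ _
    _ ≤ C * Real.exp (-α * t) * ‖y 0‖ + C / α * V := by
        gcongr
        exact (ContinuousLinearMap.le_opNorm _ _).trans (by gcongr; exact hexp t ht)

end Duhamel

end OperatorExponential

noncomputable def EuclideanSpace.ofRealLI (ι : Type*) [Fintype ι] :
    EuclideanSpace ℝ ι →ₗᵢ[ℝ] EuclideanSpace ℂ ι where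
  toFun v := WithLp.toLp 2 fun i => (v i : ℂ)
  map_add' v w := by ext i; simp
  map_smul' c v := by ext i; simp
  norm_map' v := by simp [EuclideanSpace.norm_eq]

section Euclidean

variable {ι κ : Type*} [Fintype ι] [DecidableEq ι] [Fintype κ] [DecidableEq κ]

theorem toEuclideanCLM_map_algebraMap_ofRealLI (A : Matrix ι ι ℝ) (v : EuclideanSpace ℝ ι) :
    Matrix.toEuclideanCLM (𝕜 := ℂ) (A.map (algebraMap ℝ ℂ)) (EuclideanSpace.ofRealLI ι v) =
      EuclideanSpace.ofRealLI ι (Matrix.toEuclideanLin A v) := by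
  ext i
  simp [EuclideanSpace.ofRealLI, Matrix.mulVec, dotProduct]

theorem hasDerivAt_formation_error {A1 A2 : Matrix ι ι ℝ} {B1 : Matrix ι κ ℝ}
    {B2 : Matrix ι κ ℝ} {d : EuclideanSpace ℝ ι} {S N : Matrix κ ι ℝ} {ktil : EuclideanSpace ℝ κ}
    (hN : B2 * N = A1 - A2) (hk : Matrix.toEuclideanLin B2 ktil = Matrix.toEuclideanLin A2 d)
    {u1 : ℝ → EuclideanSpace ℝ κ} {x1 x2 : ℝ → EuclideanSpace ℝ ι} {t : ℝ}
    (hx1 : HasDerivAt x1 (Matrix.toEuclideanLin A1 (x1 t) + Matrix.toEuclideanLin B1 (u1 t)) t)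
    (hx2 : HasDerivAt x2
      (Matrix.toEuclideanLin A2 (x2 t) +
        Matrix.toEuclideanLin B2
          (Matrix.toEuclideanLin S (x2 t) + Matrix.toEuclideanLin (N - S) (x1 t) +
            (ktil + Matrix.toEuclideanLin S d))) t) :
    HasDerivAt (fun s => x2 s - x1 s + d)
      (Matrix.toEuclideanLin (A2 + B2 * S) (x2 t - x1 t + d) - Matrix.toEuclideanLin B1 (u1 t))
      t := by
  refine ((hx2.sub hx1).add_const d).congr_deriv ?_
  have hB2 : ∀ (P : Matrix κ ι ℝ) (x : EuclideanSpace ℝ ι),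
      Matrix.toEuclideanLin B2 (Matrix.toEuclideanLin P x) = Matrix.toEuclideanLin (B2 * P) x := by
    simp
  rw [map_add, map_add, map_add, hk, hB2, hB2, hB2, Matrix.mul_sub, hN]
  simp only [map_add, map_sub, LinearMap.add_apply, LinearMap.sub_apply]
  abel

end Euclidean

/-- Two-object formation criterion: if `A₂ + B₂S` is Hurwitz, `B₂N = A₁ - A₂` and
`B₂k̃ = A₂d`, then the affine feedback `u₂ = Sx₂ + (N - S)x₁ + (k̃ + Sd)` makes the error
`z(t) = x₂(t) - x₁(t) + d` satisfy
`‖z(t)‖ ≤ C e^{-αt} ‖z(0)‖ + β sup_{τ∈[0,t]} ‖u₁(τ)‖` for every continuous leader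
control `u₁` and all initial conditions. -/
theorem stmt_13 (n m : ℕ) (A1 A2 : Matrix (Fin n) (Fin n) ℝ)
    (B1 B2 : Matrix (Fin n) (Fin m) ℝ) (d : EuclideanSpace ℝ (Fin n))
    (S N : Matrix (Fin m) (Fin n) ℝ) (ktil : EuclideanSpace ℝ (Fin m))
    (hS : ∀ μ ∈ spectrum ℂ ((A2 + B2 * S).map (algebraMap ℝ ℂ)), μ.re < 0)
    (hN : B2 * N = A1 - A2)
    (hk : Matrix.toEuclideanLin B2 ktil = Matrix.toEuclideanLin A2 d) :
    ∃ C > (0 : ℝ), ∃ α > (0 : ℝ), ∃ β > (0 : ℝ),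
      ∀ u1 : ℝ → EuclideanSpace ℝ (Fin m), Continuous u1 →
      ∀ x1 x2 : ℝ → EuclideanSpace ℝ (Fin n),
        (∀ t : ℝ, HasDerivAt x1
          (Matrix.toEuclideanLin A1 (x1 t) + Matrix.toEuclideanLin B1 (u1 t)) t) →
        (∀ t : ℝ, HasDerivAt x2
          (Matrix.toEuclideanLin A2 (x2 t) +
            Matrix.toEuclideanLin B2
              (Matrix.toEuclideanLin S (x2 t) + Matrix.toEuclideanLin (N - S) (x1 t) +
                (ktil + Matrix.toEuclideanLin S d))) t) →
        ∀ t : ℝ, 0 ≤ t →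
          ‖x2 t - x1 t + d‖ ≤
            C * Real.exp (-α * t) * ‖x2 0 - x1 0 + d‖ +
              β * ⨆ τ : Set.Icc (0 : ℝ) t, ‖u1 τ.1‖ := by
  obtain ⟨C, hC, α, hα, hdecay⟩ := exists_norm_exp_smul_le_of_forall_re_neg
    (Matrix.toEuclideanCLM (𝕜 := ℂ) ((A2 + B2 * S).map (algebraMap ℝ ℂ)))
    (by rwa [AlgEquiv.spectrum_eq Matrix.toEuclideanCLM])
  refine ⟨C, hC, α, hα, C * (‖B1‖ + 1) / α, by positivity,
    fun u1 hu1 x1 x2 hx1 hx2 t ht => ?_⟩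
  set J := EuclideanSpace.ofRealLI (Fin n)
  set U := ⨆ τ : Set.Icc (0 : ℝ) t, ‖u1 τ.1‖
  have hy : ∀ s, HasDerivAt (fun s => J (x2 s - x1 s + d))
      (Matrix.toEuclideanCLM (𝕜 := ℂ) ((A2 + B2 * S).map (algebraMap ℝ ℂ))
        (J (x2 s - x1 s + d)) + J (-Matrix.toEuclideanLin B1 (u1 s))) s := fun s => by
    refine (J.toContinuousLinearMap.hasFDerivAt.comp_hasDerivAt s
      (hasDerivAt_formation_error hN hk (hx1 s) (hx2 s))).congr_deriv ?_
    rw [toEuclideanCLM_map_algebraMap_ofRealLI, ← map_add, ← sub_eq_add_neg]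
    rfl
  have hbound := norm_le_of_hasDerivAt_of_norm_exp_smul_le _ hC.le hα hdecay
    (v := fun s => J (-Matrix.toEuclideanLin B1 (u1 s))) (J.continuous.comp (by fun_prop)) hy ht
    (V := ‖B1‖ * U) fun s hs => by
      rw [J.norm_map, norm_neg]
      exact (Matrix.l2_opNorm_mulVec B1 (u1 s)).trans
        (by gcongr; exact norm_le_iSup_Icc hu1 hs)
  simp only [J.norm_map] at hbound
  have hU : 0 ≤ U := Real.iSup_nonneg fun _ => norm_nonneg _
  calc _ ≤ _ := hbound
    _ = C * Real.exp (-α * t) * ‖x2 0 - x1 0 + d‖ + C * ‖B1‖ / α * U := by ring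
    _ ≤ _ := by gcongr; linarith
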